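/- Let Γ be a graph, v a vertex, and D_v(Γ) the double along St(v). Suppose there are cliques C_1, C_2 of Γ with |C_1| ≥ |C_2| and (r−1)|C_1| + |C_2| > z_r(Γ), such that no vertex of St(v) lies in C_1 ∩ C_2. Then z_r(D_v(Γ)) > z_r(Γ). -/

import Mathlib

/-!
Put `C₁` in the first copy of `Γ` and `C₂` in the second copy. The two copies meet only along
`St(v)`, which contains no vertex of `C₁ ∩ C₂`, so the images are disjoint cliques of `D_v(Γ)`.
Taking the first one `r - 1` times and the second once gives `r` cliques with empty intersection
and total size `(r - 1)|C₁| + |C₂| > z_r(Γ)`.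
-/

noncomputable def zr {V : Type*} [Fintype V] [DecidableEq V] (G : SimpleGraph V)
    (r : ℕ) : ℕ :=
  sSup {m | ∃ C : Fin r → Finset V, (∀ i, G.IsClique (C i : Set V)) ∧
    Finset.univ.inf C = ∅ ∧ m = ∑ i, (C i).card}

noncomputable def maxClique {V : Type*} [Fintype V] [DecidableEq V]
    (G : SimpleGraph V) : ℕ :=
  sSup {m | ∃ C : Finset V, G.IsClique (C : Set V) ∧ C.card = m}

/-- The star of `v`: `v` together with its neighbours. -/
def graphStar {V : Type*} (G : SimpleGraph V) (v : V) : Set V :=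
  {u | u = v ∨ G.Adj v u}

/-- Vertex set of the double `D_v(Γ)`: a full copy of `V` together with a second
copy of the vertices outside the star of `v`. -/
def DoubleVert {V : Type*} (G : SimpleGraph V) (v : V) : Type _ :=
  V ⊕ {u : V // u ∉ graphStar G v}

/-- The double `D_v(Γ)` of `Γ` along the star of `v`: two copies of `Γ` glued
along `St(v)`. -/
def graphDouble {V : Type*} (G : SimpleGraph V) (v : V) :
    SimpleGraph (DoubleVert G v) :=
  SimpleGraph.fromRel (fun a b =>
    match a, b with
    | Sum.inl x, Sum.inl y => G.Adj x y
    | Sum.inl x, Sum.inr y => x ∈ graphStar G v ∧ G.Adj x y.1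
    | Sum.inr x, Sum.inl y => y ∈ graphStar G v ∧ G.Adj y x.1
    | Sum.inr x, Sum.inr y => G.Adj x.1 y.1)

noncomputable instance {V : Type*} [Fintype V] (G : SimpleGraph V) (v : V) :
    Fintype (DoubleVert G v) := by
  classical exact inferInstanceAs (Fintype (V ⊕ {u : V // u ∉ graphStar G v}))

instance {V : Type*} [DecidableEq V] (G : SimpleGraph V) (v : V) :
    DecidableEq (DoubleVert G v) := by
  classical exact inferInstanceAs (DecidableEq (V ⊕ {u : V // u ∉ graphStar G v}))

open Finset

namespace SimpleGraph

variable {α β : Type*} {A : SimpleGraph α} {B : SimpleGraph β}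

theorem IsClique.finsetMap_copy (f : Copy A B) {s : Finset α} (hs : A.IsClique (s : Set α)) :
    B.IsClique (s.map f.toEmbedding : Set β) := by
  rw [coe_map]
  rintro _ ⟨a, ha, rfl⟩ _ ⟨b, hb, rfl⟩ hab
  exact f.toHom.map_adj (hs ha hb (ne_of_apply_ne _ hab))

end SimpleGraph

section zr

variable {V : Type*} [Fintype V] [DecidableEq V] {G : SimpleGraph V} {r : ℕ}

theorem sum_card_le_zr (C : Fin r → Finset V) (hC : ∀ i, G.IsClique (C i : Set V))
    (hinf : univ.inf C = ∅) : ∑ i, (C i).card ≤ zr G r := by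
  refine le_csSup ⟨r * Fintype.card V, ?_⟩ ⟨C, hC, hinf, rfl⟩
  rintro _ ⟨C', -, -, rfl⟩
  simpa using sum_le_sum fun i (_ : i ∈ univ) => card_le_univ (C' i)

theorem mul_card_add_card_le_zr (hr : 2 ≤ r) {D D' : Finset V} (hD : G.IsClique (D : Set V))
    (hD' : G.IsClique (D' : Set V)) (hdisj : Disjoint D D') :
    (r - 1) * D.card + D'.card ≤ zr G r := by
  obtain ⟨n, rfl⟩ : ∃ n, r = n + 2 := ⟨r - 2, by omega⟩
  let C : Fin (n + 2) → Finset V := Fin.cons D' fun _ => D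
  have hinf : univ.inf C = ∅ := by
    refine disjoint_self.mp (Disjoint.mono ?_ ?_ hdisj.symm) <;>
      [exact inf_le (mem_univ 0); exact inf_le (mem_univ 1)]
  have hsum : ∑ i, (C i).card = (n + 1) * D.card + D'.card := by
    simp [C, Fin.sum_univ_succ, add_comm]
  simpa [hsum] using sum_card_le_zr C (Fin.cons hD' fun _ => hD) hinf

end zr

namespace graphDouble

open SimpleGraph

variable {V : Type*} {G : SimpleGraph V} {v : V}

def inlCopy : Copy G (graphDouble G v) :=
  Hom.toCopy ⟨Sum.inl, fun h => (fromRel_adj _ _ _).2 ⟨Sum.inl_injective.ne h.ne, Or.inl h⟩⟩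
    Sum.inl_injective

open Classical in
noncomputable def toSecond (u : V) : DoubleVert G v :=
  if h : u ∈ graphStar G v then Sum.inl u else Sum.inr ⟨u, h⟩

def fold : DoubleVert G v → V :=
  Sum.elim id Subtype.val

theorem fold_toSecond (u : V) : fold (toSecond (G := G) (v := v) u) = u := by
  by_cases h : u ∈ graphStar G v <;> simp [toSecond, h] <;> rfl

theorem toSecond_injective : Function.Injective (toSecond (G := G) (v := v)) :=
  Function.LeftInverse.injective fold_toSecond

theorem mem_graphStar_of_toSecond_eq_inl {u w : V} (h : toSecond (G := G) (v := v) u = Sum.inl w) :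
    u ∈ graphStar G v := by
  by_contra hu
  simp [toSecond, hu] at h

noncomputable def secondCopy : Copy G (graphDouble G v) :=
  Hom.toCopy ⟨toSecond, fun {a b} h => by
    refine (fromRel_adj _ _ _).2 ⟨toSecond_injective.ne h.ne, Or.inl ?_⟩
    by_cases ha : a ∈ graphStar G v <;> by_cases hb : b ∈ graphStar G v <;>
      simp_all [toSecond, h.symm]⟩
    toSecond_injective

theorem disjoint_map_inlCopy_secondCopy [DecidableEq V] {C₁ C₂ : Finset V}
    (hstar : ∀ u ∈ graphStar G v, u ∉ C₁ ∩ C₂) :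
    Disjoint (C₁.map (inlCopy (G := G) (v := v)).toEmbedding) (C₂.map secondCopy.toEmbedding) := by
  rw [Finset.disjoint_left]
  simp only [mem_map]
  rintro _ ⟨a, ha, rfl⟩ ⟨b, hb, hba⟩
  have hab : b = a := (fold_toSecond b).symm.trans (congrArg fold hba)
  subst hab
  exact hstar b (mem_graphStar_of_toSecond_eq_inl hba) (mem_inter.mpr ⟨ha, hb⟩)

end graphDouble

theorem stmt14_general {V : Type*} [Fintype V] [DecidableEq V] (G : SimpleGraph V)
    (v : V) (r : ℕ) (hr : 2 ≤ r) (C₁ C₂ : Finset V)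
    (h₁ : G.IsClique (C₁ : Set V)) (h₂ : G.IsClique (C₂ : Set V))
    (hbig : zr G r < (r - 1) * C₁.card + C₂.card)
    (hstar : ∀ u ∈ graphStar G v, u ∉ C₁ ∩ C₂) :
    zr G r < zr (graphDouble G v) r := by
  have hdouble := mul_card_add_card_le_zr hr (h₁.finsetMap_copy graphDouble.inlCopy)
    (h₂.finsetMap_copy graphDouble.secondCopy)
    (graphDouble.disjoint_map_inlCopy_secondCopy hstar)
  simp only [card_map] at hdouble
  omega

/-- If `Γ` has cliques `C₁, C₂` with `|C₁| ≥ |C₂|` and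
`(r−1)|C₁| + |C₂| > z_r(Γ)`, such that no vertex of `St(v)` lies in `C₁ ∩ C₂`,
then `z_r(D_v(Γ)) > z_r(Γ)`. -/
theorem stmt14 {V : Type*} [Fintype V] [DecidableEq V] (G : SimpleGraph V)
    (v : V) (r : ℕ) (hr : 2 ≤ r) (C₁ C₂ : Finset V)
    (h₁ : G.IsClique (C₁ : Set V)) (h₂ : G.IsClique (C₂ : Set V))
    (hcard : C₂.card ≤ C₁.card)
    (hbig : zr G r < (r - 1) * C₁.card + C₂.card)
    (hstar : ∀ u ∈ graphStar G v, u ∉ C₁ ∩ C₂) :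
    zr G r < zr (graphDouble G v) r :=
  stmt14_general G v r hr C₁ C₂ h₁ h₂ hbig hstar
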